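/- arXiv:1512.08608 — 5 statements merged into one kernel-verified Lean document; each statement's English description precedes it below -/
import Mathlib

section
/- Let γ ∈ (-3,1] and β > 3 + max{0,γ}. Then the double integral ∫_{ℝ³}∫_{ℝ³} (1+|v|²)^{-β/2} (1+|u|²)^{-β/2} |v−u|^γ du dv is finite. -/
/-!
Write `⟨x⟩ = (1 + ‖x‖²)^(1/2)` and `s = max 0 γ`, and split `‖v - u‖^γ` at `‖v - u‖ = 1`.
Near the diagonal, bound `⟨v⟩^(-β)` by `1`: what remains is the convolution integrand of the
integrable weight `⟨u⟩^(-β)` and of `‖·‖^γ` cut off to the unit ball, which is integrable because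
`γ > -3`. Away from the diagonal, `‖v - u‖^γ ≤ ⟨v - u⟩^s ≤ 2^(s/2) ⟨v⟩^s ⟨u⟩^s` (Peetre), so the
integrand is dominated by the product `⟨v⟩^(s-β) ⟨u⟩^(s-β)`, integrable because `β - s > 3`.
-/

open MeasureTheory Real Set Metric Module

noncomputable section

abbrev R3 : Type := EuclideanSpace ℝ (Fin 3)

section Pointwise

variable {E : Type*} [NormedAddCommGroup E]

lemma one_add_norm_sub_sq_le (v u : E) :
    1 + ‖v - u‖ ^ 2 ≤ 2 * ((1 + ‖v‖ ^ 2) * (1 + ‖u‖ ^ 2)) := by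
  have h := norm_sub_le v u
  nlinarith [norm_nonneg (v - u), sq_nonneg (‖v‖ - ‖u‖), mul_nonneg (sq_nonneg ‖v‖) (sq_nonneg ‖u‖)]

lemma one_add_norm_sub_sq_rpow_le {s : ℝ} (hs : 0 ≤ s) (v u : E) :
    (1 + ‖v - u‖ ^ 2) ^ (s / 2) ≤
      2 ^ (s / 2) * ((1 + ‖v‖ ^ 2) ^ (s / 2) * (1 + ‖u‖ ^ 2) ^ (s / 2)) := by
  rw [← mul_rpow (by positivity) (by positivity), ← mul_rpow (by positivity) (by positivity)]
  exact rpow_le_rpow (by positivity) (one_add_norm_sub_sq_le v u) (by positivity)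

lemma norm_rpow_le_indicator_add_one_add_norm_sq_rpow {γ s : ℝ} (hγs : γ ≤ s) (hs : 0 ≤ s)
    (w : E) :
    ‖w‖ ^ γ ≤ (closedBall 0 1).indicator (fun x : E => ‖x‖ ^ γ) w + (1 + ‖w‖ ^ 2) ^ (s / 2) := by
  by_cases hw : ‖w‖ ≤ 1
  · rw [indicator_of_mem (mem_closedBall_zero_iff.2 hw)]
    exact le_add_of_nonneg_right (by positivity)
  · rw [indicator_of_notMem (by simpa using hw), zero_add]
    calc ‖w‖ ^ γ ≤ ‖w‖ ^ s := rpow_le_rpow_of_exponent_le (by linarith) hγs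
      _ = (‖w‖ ^ 2) ^ (s / 2) := by
        rw [← rpow_natCast, ← rpow_mul (norm_nonneg w)]
        ring_nf
      _ ≤ (1 + ‖w‖ ^ 2) ^ (s / 2) := by gcongr; linarith

lemma rpow_neg_one_add_norm_sq_le_one {β : ℝ} (hβ : 0 ≤ β) (v : E) :
    (1 + ‖v‖ ^ 2) ^ (-β / 2) ≤ 1 :=
  rpow_le_one_of_one_le_of_nonpos (by nlinarith [sq_nonneg ‖v‖]) (by linarith)

lemma weighted_kernel_le {β γ s : ℝ} (hβ : 0 ≤ β) (hγs : γ ≤ s) (hs : 0 ≤ s) (v u : E) :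
    (1 + ‖v‖ ^ 2) ^ (-β / 2) * (1 + ‖u‖ ^ 2) ^ (-β / 2) * ‖v - u‖ ^ γ ≤
      (1 + ‖u‖ ^ 2) ^ (-β / 2) * (closedBall 0 1).indicator (fun x : E => ‖x‖ ^ γ) (v - u) +
      2 ^ (s / 2) * ((1 + ‖v‖ ^ 2) ^ (-(β - s) / 2) * (1 + ‖u‖ ^ 2) ^ (-(β - s) / 2)) := by
  have hshift (x : E) :
      (1 + ‖x‖ ^ 2) ^ (-β / 2) * (1 + ‖x‖ ^ 2) ^ (s / 2) = (1 + ‖x‖ ^ 2) ^ (-(β - s) / 2) := by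
    rw [← rpow_add (by positivity)]
    ring_nf
  have hv := rpow_neg_one_add_norm_sq_le_one hβ v
  have hK := norm_rpow_le_indicator_add_one_add_norm_sq_rpow hγs hs (v - u)
  have hP := one_add_norm_sub_sq_rpow_le hs v u
  set a := (1 + ‖v‖ ^ 2) ^ (-β / 2)
  set b := (1 + ‖u‖ ^ 2) ^ (-β / 2)
  set h := (closedBall 0 1).indicator (fun x : E => ‖x‖ ^ γ) (v - u)
  have ha : 0 ≤ a := by positivity
  have hb : 0 ≤ b := by positivity
  have hh : 0 ≤ h := indicator_nonneg (fun x _ => by positivity) _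
  calc a * b * ‖v - u‖ ^ γ ≤ a * b * (h + (1 + ‖v - u‖ ^ 2) ^ (s / 2)) := by gcongr
    _ ≤ b * h + a * b * (2 ^ (s / 2) * ((1 + ‖v‖ ^ 2) ^ (s / 2) * (1 + ‖u‖ ^ 2) ^ (s / 2))) := by
      rw [mul_add]
      gcongr
      nlinarith [mul_nonneg hb hh]
    _ = b * h +
        2 ^ (s / 2) * ((1 + ‖v‖ ^ 2) ^ (-(β - s) / 2) * (1 + ‖u‖ ^ 2) ^ (-(β - s) / 2)) := by
      rw [← hshift v, ← hshift u]
      ring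

end Pointwise

section Integrability

variable {E : Type*} [NormedAddCommGroup E] [NormedSpace ℝ E] [FiniteDimensional ℝ E]
  [MeasurableSpace E] [BorelSpace E] {μ : Measure E} [μ.IsAddHaarMeasure]

lemma integrableOn_closedBall_norm_rpow [Nontrivial E] {γ : ℝ} (hγ : -(finrank ℝ E : ℝ) < γ)
    (r : ℝ) : IntegrableOn (fun x : E => ‖x‖ ^ γ) (closedBall 0 r) μ := by
  have hloc : LocallyIntegrable (fun x : E => ‖x‖ ^ γ) μ :=
    locallyIntegrable_of_norm_le_rpow (C := 1) (α := -γ) finrank_pos (by linarith)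
      (Filter.Eventually.of_forall fun x => by simp [abs_of_nonneg, rpow_nonneg])
      (measurable_norm.pow_const γ).aestronglyMeasurable
  exact hloc.integrableOn_isCompact (isCompact_closedBall 0 r)

theorem integrable_weighted_kernel [Nontrivial E] {β γ : ℝ} (hγ : -(finrank ℝ E : ℝ) < γ)
    (hβ : finrank ℝ E + max 0 γ < β) :
    Integrable (fun p : E × E =>
      (1 + ‖p.1‖ ^ 2) ^ (-β / 2) * (1 + ‖p.2‖ ^ 2) ^ (-β / 2) * ‖p.1 - p.2‖ ^ γ) (μ.prod μ) := by
  set s := max 0 γ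
  have hβ0 : 0 ≤ β := by linarith [le_max_left 0 γ, (finrank ℝ E).cast_nonneg (α := ℝ)]
  have hweight : Integrable (fun x : E => (1 + ‖x‖ ^ 2) ^ (-β / 2)) μ :=
    integrable_rpow_neg_one_add_norm_sq (by linarith [le_max_left 0 γ])
  have hshifted : Integrable (fun x : E => (1 + ‖x‖ ^ 2) ^ (-(β - s) / 2)) μ :=
    integrable_rpow_neg_one_add_norm_sq (by linarith)
  have hsingular : Integrable ((closedBall 0 1).indicator (fun x : E => ‖x‖ ^ γ)) μ :=
    (integrableOn_closedBall_norm_rpow hγ 1).integrable_indicator measurableSet_closedBall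
  have hbound := (hweight.convolution_integrand (ContinuousLinearMap.mul ℝ ℝ) hsingular).add
    ((hshifted.mul_prod hshifted).const_mul (2 ^ (s / 2)))
  refine hbound.mono' (by fun_prop) (Filter.Eventually.of_forall fun p => ?_)
  rw [norm_of_nonneg (by positivity)]
  exact weighted_kernel_le hβ0 (le_max_right 0 γ) (le_max_left 0 γ) p.1 p.2

end Integrability

/-- For `γ ∈ (-3,1]` and `β > 3 + max{0,γ}`, the double integral
`∫∫ (1+|v|²)^{-β/2} (1+|u|²)^{-β/2} |v−u|^γ du dv` is finite. -/
theorem weighted_kernel_integrable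
    (γ β : ℝ) (hγ : γ ∈ Set.Ioc (-3 : ℝ) 1) (hβ : 3 + max 0 γ < β) :
    Integrable (fun p : R3 × R3 =>
      (1 + ‖p.1‖ ^ 2) ^ (-β / 2) * (1 + ‖p.2‖ ^ 2) ^ (-β / 2) * ‖p.1 - p.2‖ ^ γ)
      (volume : Measure (R3 × R3)) := by
  rw [Measure.volume_eq_prod]
  have hdim : (finrank ℝ R3 : ℝ) = 3 := by simp
  exact integrable_weighted_kernel (by rw [hdim]; exact hγ.1) (by rwa [hdim])
end
end

section
/- Let γ ∈ (-3,1] and β > 3 + max{0,γ}. Then there exists a constant C > 0 (depending only on β and γ) such that for all v ∈ ℝ³, ∫_{ℝ³} (1+|v|+|u|)^{-β} |v−u|^γ du ≤ C·(1+|v|)^{-β+3+max{0,γ}}. -/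
open MeasureTheory Real

noncomputable section

open Metric Module

/-!
Split `‖v - u‖ ^ γ ≤ 1_{‖v - u‖ < 1} ‖v - u‖ ^ γ + max 1 ‖v - u‖ ^ max 0 γ`. The singular part is
integrable because `γ > -n`, and after bounding the weight by `(1 + ‖v‖) ^ (-β)` it contributes
`O((1 + ‖v‖) ^ (-β))`. In the regular part `max 1 ‖v - u‖ ≤ 1 + ‖v‖ + ‖u‖`, and the dilation by
`a = 1 + ‖v‖` gives `∫ (a + ‖u‖) ^ (-s) du = a ^ (n - s) ∫ (1 + ‖x‖) ^ (-s) dx` for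
`s = β - max 0 γ > n`.
-/

section Seminormed

variable {E : Type*} [SeminormedAddCommGroup E]

theorem norm_rpow_le_indicator_add (γ : ℝ) (x : E) :
    ‖x‖ ^ γ ≤ (ball 0 1).indicator (fun y ↦ ‖y‖ ^ γ) x + max 1 ‖x‖ ^ max 0 γ := by
  by_cases hx : ‖x‖ < 1
  · rw [Set.indicator_of_mem (mem_ball_zero_iff.2 hx)]
    exact le_add_of_nonneg_right (by positivity)
  · rw [Set.indicator_of_notMem (by simpa using hx), zero_add, max_eq_right (not_lt.1 hx)]
    exact rpow_le_rpow_of_exponent_le (not_lt.1 hx) (le_max_right 0 γ)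

theorem weight_mul_norm_sub_rpow_le {β : ℝ} (hβ : 0 ≤ β) (γ : ℝ) (v u : E) :
    (1 + ‖v‖ + ‖u‖) ^ (-β) * ‖v - u‖ ^ γ ≤
      (1 + ‖v‖) ^ (-β) * (ball 0 1).indicator (fun x ↦ ‖x‖ ^ γ) (v - u) +
        (1 + ‖v‖ + ‖u‖) ^ (-(β - max 0 γ)) := by
  set a := 1 + ‖v‖ + ‖u‖
  have ha : 0 < a := by positivity
  have h_weight : a ^ (-β) ≤ (1 + ‖v‖) ^ (-β) :=
    rpow_le_rpow_of_nonpos (by positivity) (le_add_of_nonneg_right (norm_nonneg u))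
      (neg_nonpos.2 hβ)
  have h_far : max 1 ‖v - u‖ ^ max 0 γ ≤ a ^ max 0 γ := by
    refine rpow_le_rpow (by positivity) (max_le ?_ ?_) (le_max_left 0 γ)
    · linarith [norm_nonneg v, norm_nonneg u]
    · linarith [norm_sub_le v u]
  have h_indicator : 0 ≤ (ball 0 1).indicator (fun x : E ↦ ‖x‖ ^ γ) (v - u) :=
    Set.indicator_nonneg (fun x _ ↦ by positivity) _
  calc a ^ (-β) * ‖v - u‖ ^ γ
      ≤ a ^ (-β) * ((ball 0 1).indicator (fun x ↦ ‖x‖ ^ γ) (v - u) + a ^ max 0 γ) := by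
        gcongr
        exact (norm_rpow_le_indicator_add γ (v - u)).trans (by gcongr)
    _ ≤ (1 + ‖v‖) ^ (-β) * (ball 0 1).indicator (fun x ↦ ‖x‖ ^ γ) (v - u) +
        a ^ (-(β - max 0 γ)) := by
        rw [mul_add, ← rpow_add ha, show -β + max 0 γ = -(β - max 0 γ) by ring]
        exact add_le_add (mul_le_mul_of_nonneg_right h_weight h_indicator) le_rfl

end Seminormed

section HaarMeasure

variable {E : Type*} [NormedAddCommGroup E] [NormedSpace ℝ E]

theorem add_norm_rpow_neg_eq_mul {a : ℝ} (ha : 0 < a) (s : ℝ) (u : E) :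
    (a + ‖u‖) ^ (-s) = a ^ (-s) * (1 + ‖a⁻¹ • u‖) ^ (-s) := by
  rw [← mul_rpow ha.le (by positivity), norm_smul, norm_inv, Real.norm_of_nonneg ha.le,
    mul_add, mul_one, mul_inv_cancel_left₀ ha.ne']

variable [FiniteDimensional ℝ E] [MeasurableSpace E] [BorelSpace E]
  {μ : Measure E} [μ.IsAddHaarMeasure]

theorem integral_add_norm_rpow_neg {a : ℝ} (ha : 0 < a) (s : ℝ) :
    ∫ u, (a + ‖u‖) ^ (-s) ∂μ = a ^ (finrank ℝ E - s) * ∫ u, (1 + ‖u‖) ^ (-s) ∂μ := by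
  simp_rw [add_norm_rpow_neg_eq_mul ha s, integral_const_mul,
    Measure.integral_comp_inv_smul_of_nonneg μ (fun u ↦ (1 + ‖u‖) ^ (-s)) ha.le, smul_eq_mul,
    ← mul_assoc, ← rpow_natCast, ← rpow_add ha, neg_add_eq_sub]

theorem integrable_add_norm_rpow_neg {a s : ℝ} (ha : 0 < a) (hs : finrank ℝ E < s) :
    Integrable (fun u ↦ (a + ‖u‖) ^ (-s)) μ := by
  simp_rw [add_norm_rpow_neg_eq_mul ha s]
  exact ((integrable_one_add_norm hs).comp_smul (inv_ne_zero ha.ne')).const_mul _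

theorem integral_one_add_norm_rpow_neg_pos {s : ℝ} (hs : finrank ℝ E < s) :
    0 < ∫ u, (1 + ‖u‖) ^ (-s) ∂μ := by
  rw [integral_pos_iff_support_of_nonneg (fun u ↦ by positivity)
    (integrable_one_add_norm hs)]
  have : Function.support (fun u : E ↦ (1 + ‖u‖) ^ (-s)) = Set.univ :=
    Function.support_eq_univ fun u ↦ by positivity
  rw [this]
  exact Measure.measure_univ_pos.2 (NeZero.ne μ)

theorem integrable_indicator_ball_norm_rpow (hd : 1 ≤ finrank ℝ E) {γ : ℝ}
    (hγ : -(finrank ℝ E : ℝ) < γ) :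
    Integrable ((ball 0 1).indicator (fun x : E ↦ ‖x‖ ^ γ)) μ := by
  refine (integrable_indicator_iff measurableSet_ball).2 ?_
  refine integrableOn_ball_of_norm_le_rpow (C := 1) (α := -γ) hd (by linarith) ?_ ?_
  · refine Filter.Eventually.of_forall fun x ↦ ?_
    rw [neg_neg, one_mul, Real.norm_of_nonneg (by positivity)]
  · exact (measurable_norm.pow_const γ).aestronglyMeasurable

theorem exists_integral_weight_mul_norm_sub_rpow_le (hd : 1 ≤ finrank ℝ E) {γ β : ℝ}
    (hγ : -(finrank ℝ E : ℝ) < γ) (hβ : finrank ℝ E + max 0 γ < β) :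
    ∃ C : ℝ, 0 < C ∧ ∀ v : E,
      ∫ u, (1 + ‖v‖ + ‖u‖) ^ (-β) * ‖v - u‖ ^ γ ∂μ ≤
        C * (1 + ‖v‖) ^ (-β + finrank ℝ E + max 0 γ) := by
  set F := (ball 0 1).indicator (fun x : E ↦ ‖x‖ ^ γ)
  have hF : Integrable F μ := integrable_indicator_ball_norm_rpow hd hγ
  have hF_nonneg : 0 ≤ ∫ x, F x ∂μ :=
    integral_nonneg (Set.indicator_nonneg fun x _ ↦ by positivity)
  have hs : (finrank ℝ E : ℝ) < β - max 0 γ := by linarith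
  refine ⟨∫ x, F x ∂μ + ∫ u, (1 + ‖u‖) ^ (-(β - max 0 γ)) ∂μ,
    add_pos_of_nonneg_of_pos hF_nonneg (integral_one_add_norm_rpow_neg_pos hs), fun v ↦ ?_⟩
  have ha : 1 ≤ 1 + ‖v‖ := le_add_of_nonneg_right (norm_nonneg v)
  have hF_v : Integrable (fun u ↦ (1 + ‖v‖) ^ (-β) * F (v - u)) μ :=
    (hF.comp_sub_left v).const_mul _
  have hG_v : Integrable (fun u ↦ (1 + ‖v‖ + ‖u‖) ^ (-(β - max 0 γ))) μ :=
    integrable_add_norm_rpow_neg (by positivity) hs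
  calc ∫ u, (1 + ‖v‖ + ‖u‖) ^ (-β) * ‖v - u‖ ^ γ ∂μ
      ≤ ∫ u, (1 + ‖v‖) ^ (-β) * F (v - u) + (1 + ‖v‖ + ‖u‖) ^ (-(β - max 0 γ)) ∂μ :=
        integral_mono_of_nonneg (.of_forall fun u ↦ by positivity) (hF_v.add hG_v)
          (.of_forall fun u ↦ weight_mul_norm_sub_rpow_le (by linarith [le_max_left 0 γ]) γ v u)
    _ = (1 + ‖v‖) ^ (-β) * ∫ x, F x ∂μ +
        (1 + ‖v‖) ^ (finrank ℝ E - (β - max 0 γ)) * ∫ u, (1 + ‖u‖) ^ (-(β - max 0 γ)) ∂μ := by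
        rw [integral_add hF_v hG_v, integral_const_mul, integral_sub_left_eq_self F μ v,
          integral_add_norm_rpow_neg (by positivity)]
    _ ≤ (1 + ‖v‖) ^ (-β + finrank ℝ E + max 0 γ) * ∫ x, F x ∂μ +
        (1 + ‖v‖) ^ (-β + finrank ℝ E + max 0 γ) * ∫ u, (1 + ‖u‖) ^ (-(β - max 0 γ)) ∂μ := by
        rw [sub_sub_eq_add_sub, ← neg_add_eq_sub, ← add_assoc]
        gcongr
        linarith [le_max_left 0 γ]
    _ = _ := by ring

end HaarMeasure

/-- The estimate (2.12-3): for `γ ∈ (-3,1]` and `β > 3 + max{0,γ}` there exists `C > 0`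
such that `∫ (1+|v|+|u|)^{-β} |v−u|^γ du ≤ C (1+|v|)^{-β+3+max{0,γ}}` for all `v`. -/
theorem convolution_weight_estimate
    (γ β : ℝ) (hγ : γ ∈ Set.Ioc (-3 : ℝ) 1) (hβ : 3 + max 0 γ < β) :
    ∃ C : ℝ, 0 < C ∧ ∀ v : R3,
      (∫ u : R3, (1 + ‖v‖ + ‖u‖) ^ (-β) * ‖v - u‖ ^ γ)
        ≤ C * (1 + ‖v‖) ^ (-β + 3 + max 0 γ) := by
  have h3 : (finrank ℝ R3 : ℝ) = 3 := by simp
  have h := exists_integral_weight_mul_norm_sub_rpow_le (μ := volume) (E := R3) (γ := γ) (β := β)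
    (by simp) (by rw [h3]; exact hγ.1) (by rwa [h3])
  rwa [h3] at h
end
end

section
/- Let γ ∈ (-3,1] and β > 4. Then there exists a constant C > 0 (depending only on β and γ) such that for every two-dimensional linear subspace W ⊆ ℝ³, every v ∈ ℝ³, and every r > 0, ∫_W (1+|v+z|²)^{-β/4} (r+|z|)^{γ−1} dz ≤ C·r^{(γ−1)/2}, where the integral is with respect to two-dimensional Lebesgue measure on W. -/
/-! With `s = (γ - 1) / 2 ∈ (-2, 0]` we have `(r + |z|)^(γ-1) ≤ r^s (r + |z|)^s`. For `|z| ≥ 1` the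
factor `(r + |z|)^s` is at most `1`, and the weight `(1 + |v + z|²)^(-β/4)` is dominated by
`(1 + |Pv + z|²)^(-β/4)` with `P` the orthogonal projection onto `W`; by translation invariance its
integral over `W` is that of `(1 + |z|²)^(-β/4)`, finite because `β/2 > 2`. For `|z| < 1` the weight
is at most `1` and `(r + |z|)^s ≤ |z|^s`, which is integrable on the unit disc because `s > -2`.
Both majorants are radial, so their integrals depend on `W` only through its dimension. -/

open MeasureTheory Real

noncomputable section

open Metric Module Set

section RadialIntegrals

variable {F : Type*} [NormedAddCommGroup F] [InnerProductSpace ℝ F] [FiniteDimensional ℝ F]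
  [MeasurableSpace F] [BorelSpace F]

theorem integral_fun_norm_eq_euclideanSpace {n : ℕ} (hn : finrank ℝ F = n) (f : ℝ → ℝ) :
    ∫ z : F, f ‖z‖ = ∫ y : EuclideanSpace ℝ (Fin n), f ‖y‖ := by
  let b : OrthonormalBasis (Fin n) ℝ F := (stdOrthonormalBasis ℝ F).reindex (finCongr hn)
  rw [← b.measurePreserving_repr_symm.integral_comp
    b.repr.symm.toHomeomorph.measurableEmbedding]
  simp only [LinearIsometryEquiv.norm_map]

theorem integrableOn_ball_norm_rpow [Nontrivial F] {s : ℝ} (hs : -(finrank ℝ F : ℝ) < s) :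
    IntegrableOn (fun z : F ↦ ‖z‖ ^ s) (ball 0 1) := by
  refine (integrableOn_fun_norm_addHaar (f := (· ^ s)) volume).2 ?_
  have hd : 1 ≤ finrank ℝ F := finrank_pos
  have hpow : IntegrableOn (fun y : ℝ ↦ y ^ ((finrank ℝ F : ℝ) - 1 + s)) (Ioo 0 1) :=
    ((intervalIntegrable_iff_integrableOn_Ioc_of_le zero_le_one).1
      (intervalIntegral.intervalIntegrable_rpow' (by linarith))).mono_set Ioo_subset_Ioc_self
  refine hpow.congr_fun (fun y hy ↦ ?_) measurableSet_Ioo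
  dsimp only
  rw [smul_eq_mul, rpow_add hy.1, ← rpow_natCast, Nat.cast_sub hd, Nat.cast_one]

theorem integrable_indicator_Iio_one_rpow_norm [Nontrivial F] {s : ℝ}
    (hs : -(finrank ℝ F : ℝ) < s) :
    Integrable (fun z : F ↦ (Iio 1).indicator (· ^ s) ‖z‖) := by
  refine ((integrable_indicator_iff measurableSet_ball).2 (integrableOn_ball_norm_rpow hs)).congr
    (.of_forall fun z ↦ ?_)
  simp [indicator]

end RadialIntegrals

theorem norm_orthogonalProjectionOnto_add_le {E : Type*} [NormedAddCommGroup E]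
    [InnerProductSpace ℝ E] (K : Submodule ℝ E) [K.HasOrthogonalProjection] (v : E) {z : E}
    (hz : z ∈ K) : ‖(K.orthogonalProjectionOnto v : E) + z‖ ≤ ‖v + z‖ := by
  have := K.norm_orthogonalProjectionOnto_apply_le (v + z)
  rwa [map_add, K.orthogonalProjectionOnto_mem_subspace_eq_self ⟨z, hz⟩] at this

theorem mul_add_rpow_two_mul_le {w w' r t s : ℝ} (hw : 0 ≤ w) (hw₁ : w ≤ 1) (hww' : w ≤ w')
    (hr : 0 < r) (ht : 0 < t) (hs : s ≤ 0) :
    w * (r + t) ^ (2 * s) ≤ r ^ s * (w' + (Iio 1).indicator (· ^ s) t) := by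
  have hrt : 0 < r + t := by linarith
  have hrt_le : (r + t) ^ s ≤ r ^ s := rpow_le_rpow_of_nonpos hr (by linarith) hs
  have hsplit : w * (r + t) ^ (2 * s) ≤ r ^ s * (w * (r + t) ^ s) := by
    rw [two_mul, rpow_add hrt, mul_left_comm]
    gcongr
  refine hsplit.trans (mul_le_mul_of_nonneg_left ?_ (rpow_nonneg hr.le s))
  by_cases ht₁ : t < 1
  · rw [indicator_of_mem (mem_Iio.2 ht₁)]
    calc w * (r + t) ^ s ≤ 1 * t ^ s :=
          mul_le_mul hw₁ (rpow_le_rpow_of_nonpos ht (by linarith) hs) (rpow_nonneg hrt.le s)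
            zero_le_one
      _ ≤ w' + t ^ s := by linarith
  · rw [indicator_of_notMem (mt mem_Iio.1 ht₁), add_zero]
    calc w * (r + t) ^ s ≤ w * 1 := by
          gcongr
          exact rpow_le_one_of_one_le_of_nonpos (by linarith [not_lt.1 ht₁]) hs
      _ ≤ w' := by linarith

theorem integral_subspace_one_add_norm_sq_rpow_mul_le {E : Type*} [NormedAddCommGroup E]
    [InnerProductSpace ℝ E] [MeasurableSpace E] [BorelSpace E] (W : Submodule ℝ E)
    [FiniteDimensional ℝ W] {n : ℕ} (hn : finrank ℝ W = n) {β s r : ℝ}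
    (hβ : (n : ℝ) < β / 2) (hs₀ : -(n : ℝ) < s) (hs : s ≤ 0) (hr : 0 < r) (v : E) :
    ∫ z : W, (1 + ‖v + (z : E)‖ ^ 2) ^ (-β / 4) * (r + ‖(z : E)‖) ^ (2 * s) ≤
      r ^ s * ((∫ y : EuclideanSpace ℝ (Fin n), (1 + ‖y‖ ^ 2) ^ (-β / 4)) +
        ∫ y : EuclideanSpace ℝ (Fin n), (Iio 1).indicator (· ^ s) ‖y‖) := by
  have : Nontrivial W := finrank_pos_iff.1 (by rw [hn]; exact_mod_cast (by linarith : (0 : ℝ) < n))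
  set p := W.orthogonalProjectionOnto v
  have hint₁ : Integrable (fun z : W ↦ (1 + ‖p + z‖ ^ 2) ^ (-β / 4)) := by
    have := integrable_rpow_neg_one_add_norm_sq (E := W) (μ := volume) (r := β / 2) (hn ▸ hβ)
    rw [show -(β / 2) / 2 = -β / 4 by ring] at this
    exact this.comp_add_left p
  have hint₂ : Integrable (fun z : W ↦ (Iio 1).indicator (· ^ s) ‖z‖) :=
    integrable_indicator_Iio_one_rpow_norm (hn ▸ hs₀)
  have hbound : ∀ᵐ z : W, (1 + ‖v + (z : E)‖ ^ 2) ^ (-β / 4) * (r + ‖(z : E)‖) ^ (2 * s) ≤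
      r ^ s * ((1 + ‖p + z‖ ^ 2) ^ (-β / 4) + (Iio 1).indicator (· ^ s) ‖z‖) := by
    -- `z = 0` is excluded since Mathlib's `0 ^ s = 0` for `s < 0` breaks `(r + t) ^ s ≤ t ^ s`.
    filter_upwards [compl_mem_ae_iff.2 (measure_singleton (0 : W))] with z hz
    have hproj : ‖p + z‖ ≤ ‖v + (z : E)‖ := norm_orthogonalProjectionOnto_add_le W v z.2
    have hβ₀ : -β / 4 ≤ 0 := by linarith [(n.cast_nonneg : (0 : ℝ) ≤ n)]
    refine mul_add_rpow_two_mul_le (t := ‖z‖) (by positivity) ?_ ?_ hr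
      (norm_pos_iff.2 (show z ≠ 0 from hz)) hs
    · exact rpow_le_one_of_one_le_of_nonpos (by nlinarith) hβ₀
    · exact rpow_le_rpow_of_nonpos (by positivity) (by gcongr) hβ₀
  calc _ ≤ ∫ z : W, r ^ s * ((1 + ‖p + z‖ ^ 2) ^ (-β / 4) + (Iio 1).indicator (· ^ s) ‖z‖) :=
        integral_mono_of_nonneg (.of_forall fun _ ↦ by positivity)
          ((hint₁.add hint₂).const_mul _) hbound
    _ = _ := by
        rw [integral_const_mul, integral_add hint₁ hint₂,
          integral_add_left_eq_self (fun z : W ↦ (1 + ‖z‖ ^ 2) ^ (-β / 4)) p,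
          integral_fun_norm_eq_euclideanSpace hn (fun t ↦ (1 + t ^ 2) ^ (-β / 4)),
          integral_fun_norm_eq_euclideanSpace hn]

/-- The estimate (2.22-1): for `γ ∈ (-3,1]` and `β > 4` there is `C = C(β,γ) > 0` such
that for every plane `W ⊆ ℝ³` (a two-dimensional linear subspace, carrying its
two-dimensional Lebesgue measure), every `v ∈ ℝ³` and every `r > 0`,
`∫_W (1+|v+z|²)^{-β/4} (r+|z|)^{γ−1} dz ≤ C r^{(γ−1)/2}`. -/
theorem plane_integral_estimate
    (γ β : ℝ) (hγ : γ ∈ Set.Ioc (-3 : ℝ) 1) (hβ : 4 < β) :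
    ∃ C : ℝ, 0 < C ∧
      ∀ W : Submodule ℝ R3, Module.finrank ℝ W = 2 →
        ∀ v : R3, ∀ r : ℝ, 0 < r →
          (∫ z : W, (1 + ‖v + (z : R3)‖ ^ 2) ^ (-β / 4) * (r + ‖(z : R3)‖) ^ (γ - 1))
            ≤ C * r ^ ((γ - 1) / 2) := by
  obtain ⟨hγ₁, hγ₂⟩ := hγ
  set s := (γ - 1) / 2 with hs_def
  set A := ∫ y : EuclideanSpace ℝ (Fin 2), (1 + ‖y‖ ^ 2) ^ (-β / 4)
  set B := ∫ y : EuclideanSpace ℝ (Fin 2), (Iio 1).indicator (· ^ s) ‖y‖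
  have hA : 0 ≤ A := integral_nonneg fun _ ↦ by positivity
  have hB : 0 ≤ B := integral_nonneg fun y ↦ indicator_apply_nonneg fun _ ↦ by positivity
  refine ⟨A + B + 1, by positivity, fun W hW v r hr ↦ ?_⟩
  rw [show γ - 1 = 2 * s by ring]
  calc _ ≤ r ^ s * (A + B) :=
        integral_subspace_one_add_norm_sq_rpow_mul_le W hW (by push_cast; linarith)
          (by push_cast; linarith) (by linarith) hr v
    _ ≤ (A + B + 1) * r ^ s := by nlinarith [rpow_pos_of_pos hr s]
end
end

section
/- Let γ ∈ (-3,1], β > 6, and set p = 1 + (3+γ)/(4(9−γ)). Then the double integral ∫_{ℝ³}∫_{ℝ³} (1+|v|²)^{-pβ/4} (1+|η|²)^{-pβ/4} |η−v|^{p(γ−3)/2} dη dv is finite. -/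
open MeasureTheory Real

noncomputable section

/-!
With `q = p(γ−3)/2` and `W v = (1+|v|²)^{-pβ/4}`, the choice of `p` puts `q` in `(−3, 0)` and
makes `pβ/2 > 3`. Hence `|x|^q ≤ k x + 1` with `k = 1_{|x|<1} |x|^q` integrable on `ℝ³`, and `W` is
integrable and bounded by `1`. The integrand is therefore dominated by
`W v · k(η − v) + W v · W η`, and the first term is integrable by the shear `(v, η) ↦ (v, η − v)`.
-/

open Metric

section Kernel

variable {E : Type*} [NormedAddCommGroup E] [NormedSpace ℝ E] [FiniteDimensional ℝ E]
  [MeasurableSpace E] [BorelSpace E] [Nontrivial E] (μ : Measure E) [μ.IsAddHaarMeasure]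

theorem integrableOn_ball_norm_rpow_s13 {a : ℝ} (ha : -(Module.finrank ℝ E : ℝ) < a) (r : ℝ) :
    IntegrableOn (fun x : E => ‖x‖ ^ a) (ball 0 r) μ := by
  rw [integrableOn_fun_norm_addHaar μ (f := fun y => y ^ a)]
  have hrad : IntegrableOn (fun y : ℝ => y ^ (a + (Module.finrank ℝ E - 1 : ℕ)))
      (Set.Ioo 0 (max r 1)) :=
    (intervalIntegral.integrableOn_Ioo_rpow_iff (by positivity)).2 (by
      have : 1 ≤ Module.finrank ℝ E := Module.finrank_pos
      push_cast [this]; linarith)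
  refine (hrad.mono_set (Set.Ioo_subset_Ioo_right (le_max_left r 1))).congr_fun
    (fun y hy => ?_) measurableSet_Ioo
  dsimp only
  rw [smul_eq_mul, rpow_add hy.1, rpow_natCast, mul_comm]

theorem integrable_indicator_ball_norm_rpow_s13 {a : ℝ} (ha : -(Module.finrank ℝ E : ℝ) < a)
    (r : ℝ) : Integrable ((ball (0 : E) r).indicator fun x => ‖x‖ ^ a) μ :=
  (integrableOn_ball_norm_rpow_s13 μ ha r).integrable_indicator measurableSet_ball

end Kernel

theorem norm_rpow_le_indicator_ball_add_one {E : Type*} [SeminormedAddCommGroup E] {a : ℝ}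
    (ha : a ≤ 0) (x : E) :
    ‖x‖ ^ a ≤ (ball (0 : E) 1).indicator (fun y => ‖y‖ ^ a) x + 1 := by
  by_cases hx : x ∈ ball (0 : E) 1
  · rw [Set.indicator_of_mem hx]; linarith
  · rw [Set.indicator_of_notMem hx, zero_add]
    exact rpow_le_one_of_one_le_of_nonpos (by simpa using hx) ha

section Shear

variable {G : Type*} [MeasurableSpace G] [AddGroup G] [MeasurableAdd₂ G] [MeasurableNeg G]
  {μ : Measure G} [SFinite μ] [μ.IsAddRightInvariant]

theorem integrable_mul_comp_sub_prod {W k : G → ℝ} (hW : Integrable W μ) (hk : Integrable k μ) :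
    Integrable (fun z : G × G => W z.1 * k (z.2 - z.1)) (μ.prod μ) :=
  (measurePreserving_prod_sub μ μ).integrable_comp_of_integrable (hW.mul_prod hk)

theorem integrable_mul_mul_comp_sub_of_norm_le_add_one {W k K : G → ℝ}
    (hW : Integrable W μ) (hW0 : ∀ x, 0 ≤ W x) (hW1 : ∀ x, W x ≤ 1) (hk : Integrable k μ)
    (hk0 : ∀ x, 0 ≤ k x)
    (hKm : AEStronglyMeasurable (fun z : G × G => K (z.2 - z.1)) (μ.prod μ))
    (hK : ∀ x, ‖K x‖ ≤ k x + 1) :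
    Integrable (fun z : G × G => W z.1 * W z.2 * K (z.2 - z.1)) (μ.prod μ) := by
  refine ((integrable_mul_comp_sub_prod hW hk).add (hW.mul_prod hW)).mono'
    ((hW.1.comp_fst.mul hW.1.comp_snd).mul hKm) (Filter.Eventually.of_forall fun z => ?_)
  obtain ⟨v, η⟩ := z
  have hv := hW0 v
  have hη := hW0 η
  calc ‖W v * W η * K (η - v)‖ = W v * W η * ‖K (η - v)‖ := by
        rw [norm_mul, norm_mul, Real.norm_of_nonneg hv, Real.norm_of_nonneg hη]
    _ ≤ W v * W η * (k (η - v) + 1) := mul_le_mul_of_nonneg_left (hK _) (mul_nonneg hv hη)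
    _ ≤ W v * k (η - v) + W v * W η := by
        nlinarith [mul_nonneg (sub_nonneg.2 (hW1 η)) (mul_nonneg hv (hk0 (η - v)))]

end Shear

theorem one_lt_of_eq_one_add_div {γ p : ℝ} (hγ : γ ∈ Set.Ioc (-3 : ℝ) 1)
    (hp : p = 1 + (3 + γ) / (4 * (9 - γ))) : 1 < p := by
  obtain ⟨hγ1, hγ2⟩ := hγ
  rw [hp, lt_add_iff_pos_right]
  exact div_pos (by linarith) (by linarith)

theorem neg_three_lt_mul_sub_three_div_two {γ p : ℝ} (hγ : γ ∈ Set.Ioc (-3 : ℝ) 1)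
    (hp : p = 1 + (3 + γ) / (4 * (9 - γ))) : -3 < p * (γ - 3) / 2 := by
  obtain ⟨hγ1, hγ2⟩ := hγ
  have h9 : 0 < 9 - γ := by linarith
  have hpe : p * (4 * (9 - γ)) = 4 * (9 - γ) + (3 + γ) := by
    rw [hp]; field_simp
  nlinarith

/-- For `γ ∈ (-3,1]`, `β > 6` and `p = 1 + (3+γ)/(4(9−γ))`, the double integral
`∫∫ (1+|v|²)^{-pβ/4} (1+|η|²)^{-pβ/4} |η−v|^{p(γ−3)/2} dη dv` is finite. -/
theorem carleman_weight_integrable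
    (γ β : ℝ) (hγ : γ ∈ Set.Ioc (-3 : ℝ) 1) (hβ : 6 < β)
    (p : ℝ) (hp : p = 1 + (3 + γ) / (4 * (9 - γ))) :
    Integrable (fun z : R3 × R3 =>
      (1 + ‖z.1‖ ^ 2) ^ (-(p * β) / 4) * (1 + ‖z.2‖ ^ 2) ^ (-(p * β) / 4) *
        ‖z.2 - z.1‖ ^ (p * (γ - 3) / 2))
      (volume : Measure (R3 × R3)) := by
  have hp1 := one_lt_of_eq_one_add_div hγ hp
  have hq3 := neg_three_lt_mul_sub_three_div_two hγ hp
  have hq0 : p * (γ - 3) / 2 ≤ 0 := by nlinarith [hγ.2]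
  have hdim : (Module.finrank ℝ R3 : ℝ) = 3 := by simp
  have hW : Integrable (fun v : R3 => (1 + ‖v‖ ^ 2) ^ (-(p * β) / 4)) := by
    have := integrable_rpow_neg_one_add_norm_sq (μ := (volume : Measure R3))
      (r := p * β / 2) (by rw [hdim]; nlinarith)
    rwa [show -(p * β / 2) / 2 = -(p * β) / 4 by ring] at this
  refine integrable_mul_mul_comp_sub_of_norm_le_add_one
    (K := fun x => ‖x‖ ^ (p * (γ - 3) / 2)) hW
    (fun v => rpow_nonneg (by positivity) _)
    (fun v => rpow_le_one_of_one_le_of_nonpos (by nlinarith [sq_nonneg ‖v‖]) (by nlinarith))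
    (integrable_indicator_ball_norm_rpow_s13 volume (by rwa [hdim]) 1)
    (Set.indicator_nonneg fun x _ => rpow_nonneg (norm_nonneg x) _)
    (by fun_prop : Measurable _).aestronglyMeasurable (fun x => ?_)
  rw [Real.norm_of_nonneg (rpow_nonneg (norm_nonneg x) _)]
  exact norm_rpow_le_indicator_ball_add_one hq0 x
end
end

section
/- Let F₀ be a near-vacuum initial datum built from (ρ₀, u₀, P) as described, with bounds 0 ≤ ρ₀(x) ≤ Ĉ and |u₀(x)| ≤ Ĉ for all x, |P(v)| ≤ C(1+|v|)^m for all v, and with ρ₀ ∈ L^p(ℝ³) and |u₀| ∈ L^p(ℝ³) for some p ∈ [1,∞). Then for any fixed times 0 < t₁ < T < ∞, sup_{(x,t) ∈ ℝ³×[t₁,T]} ∫_{ℝ³} |F₀(x+δ − v(t+σ), v) − F₀(x − vt, v)| dv → 0 as (σ,δ) → (0,0) in ℝ×ℝ³; in particular, for every fixed (x,t) ∈ ℝ³×(0,∞), ∫_{ℝ³} |F₀(x+δ − v(t+σ), v) − F₀(x − vt, v)| dv → 0 as (σ,δ) → (0,0). -/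
/-!
Write `F₀ y v = c (1 + P v) ρ₀(y) exp (-|v - u₀(y)|² / 2)`. Uniformly in `y`, `|F₀ y v|` is
bounded by a Gaussian in `v`, so velocities outside a large ball contribute little. On the ball
`|v| ≤ R`, `F₀ y v` is Lipschitz in the datum `f(y) = (ρ₀(y), u₀(y))`, so it suffices that
`∫_{|v| ≤ R} |f(x + δ - (t + σ) v) - f(x - t v)| dv` is small uniformly in `x` and `t ≥ t₁`.
For a compactly supported continuous `f` this is uniform continuity. A general `f ∈ Lᵖ` is
approximated by such functions: after the substitution `w = a - s v` with `s ≥ t₁ / 2` and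
Hölder's inequality on the ball, the approximation error costs a fixed multiple of its `Lᵖ` norm.
-/

open MeasureTheory Real Set Filter

noncomputable section

open Metric Topology
open scoped ENNReal NNReal

theorem lipschitzWith_exp_neg_sq_div_two : LipschitzWith 1 fun s : ℝ => exp (-s ^ 2 / 2) := by
  refine lipschitzWith_of_nnnorm_deriv_le (by fun_prop) fun s => ?_
  have hderiv : deriv (fun s : ℝ => exp (-s ^ 2 / 2)) s = -s * exp (-s ^ 2 / 2) := by
    have : HasDerivAt (fun s : ℝ => exp (-s ^ 2 / 2)) (exp (-s ^ 2 / 2) * (-(2 * s) / 2)) s := by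
      convert ((hasDerivAt_pow 2 s).fun_neg.div_const 2).exp using 1; ring
    rw [this.deriv]; ring
  have hs : |s| ≤ exp (s ^ 2 / 2) := by
    nlinarith [add_one_le_exp (s ^ 2 / 2), sq_abs s, sq_nonneg (|s| - 1)]
  rw [← NNReal.coe_le_coe, coe_nnnorm, hderiv, norm_mul, norm_neg, Real.norm_eq_abs,
    Real.norm_eq_abs, abs_exp, NNReal.coe_one]
  calc |s| * exp (-s ^ 2 / 2) ≤ exp (s ^ 2 / 2) * exp (-s ^ 2 / 2) := by gcongr
    _ = 1 := by rw [← exp_add, neg_div, add_neg_cancel, exp_zero]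

theorem one_add_rpow_le_exp (m : ℝ) {r : ℝ} (hr : 0 ≤ r) :
    (1 + r) ^ m ≤ exp (2 * m ^ 2 + r ^ 2 / 8) := by
  calc (1 + r) ^ m ≤ (1 + r) ^ |m| := rpow_le_rpow_of_exponent_le (by linarith) (le_abs_self m)
    _ ≤ exp r ^ |m| := by gcongr; linarith [add_one_le_exp r]
    _ = exp (|m| * r) := by rw [← exp_mul, mul_comm]
    _ ≤ exp (2 * m ^ 2 + r ^ 2 / 8) := by
        gcongr
        nlinarith [sq_nonneg (|m| - r / 4), sq_abs m]

theorem nonneg_of_abs_le_mul_one_add_rpow {C m r a : ℝ} (hr : 0 ≤ r)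
    (ha : |a| ≤ C * (1 + r) ^ m) : 0 ≤ C :=
  nonneg_of_mul_nonneg_left ((abs_nonneg a).trans ha) (by positivity)

theorem abs_one_add_le_of_abs_le_rpow {C m r a : ℝ} (hr : 0 ≤ r) (ha : |a| ≤ C * (1 + r) ^ m) :
    |1 + a| ≤ (1 + C) * exp (2 * m ^ 2 + r ^ 2 / 8) := by
  have hpow := one_add_rpow_le_exp m hr
  have hC := nonneg_of_abs_le_mul_one_add_rpow hr ha
  have h1 : 1 ≤ exp (2 * m ^ 2 + r ^ 2 / 8) := one_le_exp (by positivity)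
  calc |1 + a| ≤ 1 + |a| := by simpa using abs_add_le 1 a
    _ ≤ 1 + C * exp (2 * m ^ 2 + r ^ 2 / 8) := by gcongr; exact ha.trans (by gcongr)
    _ ≤ (1 + C) * exp (2 * m ^ 2 + r ^ 2 / 8) := by nlinarith

theorem rpow_neg_three_halves_two_pi_mem_Icc : (2 * π) ^ (-(3:ℝ)/2) ∈ Icc (0 : ℝ) 1 :=
  ⟨rpow_nonneg (by positivity) _,
    rpow_le_one_of_one_le_of_nonpos (by nlinarith [pi_gt_three]) (by norm_num)⟩

section NearVacuum

variable {V : Type*} [NormedAddCommGroup V]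

theorem abs_exp_neg_sq_norm_sub_sub_le (v u u' : V) :
    |exp (-‖v - u‖ ^ 2 / 2) - exp (-‖v - u'‖ ^ 2 / 2)| ≤ ‖u - u'‖ := by
  have := lipschitzWith_exp_neg_sq_div_two.dist_le_mul ‖v - u‖ ‖v - u'‖
  rw [NNReal.coe_one, one_mul, Real.dist_eq, Real.dist_eq] at this
  refine this.trans ?_
  simpa [norm_sub_rev u u'] using abs_norm_sub_norm_le (v - u) (v - u')

theorem exp_neg_sq_norm_sub_le (v u : V) :
    exp (-‖v - u‖ ^ 2 / 2) ≤ exp (‖u‖ ^ 2 / 2) * exp (-‖v‖ ^ 2 / 4) := by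
  rw [← exp_add, exp_le_exp]
  have := pow_le_pow_left₀ (norm_nonneg v) (norm_le_norm_sub_add v u) 2
  nlinarith [norm_nonneg (v - u), norm_nonneg u, sq_nonneg (‖v - u‖ - ‖u‖)]

theorem abs_mul_exp_neg_sq_norm_sub_sub_le {ρ ρ' Chat : ℝ} (hρ' : 0 ≤ ρ') (hρ'C : ρ' ≤ Chat)
    (v u u' : V) :
    |ρ * exp (-‖v - u‖ ^ 2 / 2) - ρ' * exp (-‖v - u'‖ ^ 2 / 2)|
      ≤ |ρ - ρ'| + Chat * ‖u - u'‖ := by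
  have hE : exp (-‖v - u‖ ^ 2 / 2) ≤ 1 := exp_le_one_iff.2 (by nlinarith [sq_nonneg ‖v - u‖])
  calc |ρ * exp (-‖v - u‖ ^ 2 / 2) - ρ' * exp (-‖v - u'‖ ^ 2 / 2)|
      = |(ρ - ρ') * exp (-‖v - u‖ ^ 2 / 2)
          + ρ' * (exp (-‖v - u‖ ^ 2 / 2) - exp (-‖v - u'‖ ^ 2 / 2))| := by ring_nf
    _ ≤ |ρ - ρ'| * exp (-‖v - u‖ ^ 2 / 2)
          + ρ' * |exp (-‖v - u‖ ^ 2 / 2) - exp (-‖v - u'‖ ^ 2 / 2)| := by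
        refine (abs_add_le _ _).trans_eq ?_
        rw [abs_mul, abs_mul, abs_of_nonneg hρ', abs_of_nonneg (exp_pos _).le]
    _ ≤ |ρ - ρ'| * 1 + Chat * ‖u - u'‖ :=
        add_le_add (mul_le_mul_of_nonneg_left hE (abs_nonneg _))
          (mul_le_mul hρ'C (abs_exp_neg_sq_norm_sub_sub_le v u u') (abs_nonneg _)
            (hρ'.trans hρ'C))
    _ = |ρ - ρ'| + Chat * ‖u - u'‖ := by ring

theorem abs_nearVacuum_le {ρ a Chat C m : ℝ} {u v : V} (hρ : 0 ≤ ρ) (hρC : ρ ≤ Chat)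
    (hu : ‖u‖ ≤ Chat) (ha : |a| ≤ C * (1 + ‖v‖) ^ m) :
    |(2 * π) ^ (-(3:ℝ)/2) * ρ * (1 + a) * exp (-‖v - u‖ ^ 2 / 2)|
      ≤ Chat * (1 + C) * exp (2 * m ^ 2 + Chat ^ 2 / 2) * exp (-8⁻¹ * ‖v‖ ^ 2) := by
  obtain ⟨hc₀, hc₁⟩ := rpow_neg_three_halves_two_pi_mem_Icc
  have hChat : 0 ≤ Chat := hρ.trans hρC
  have hC := nonneg_of_abs_le_mul_one_add_rpow (norm_nonneg v) ha
  have hu2 : ‖u‖ ^ 2 ≤ Chat ^ 2 := pow_le_pow_left₀ (norm_nonneg u) hu 2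
  calc |(2 * π) ^ (-(3:ℝ)/2) * ρ * (1 + a) * exp (-‖v - u‖ ^ 2 / 2)|
      = (2 * π) ^ (-(3:ℝ)/2) * ρ * |1 + a| * exp (-‖v - u‖ ^ 2 / 2) := by
        rw [abs_mul, abs_mul, abs_mul, abs_of_nonneg hc₀, abs_of_nonneg hρ, abs_exp]
    _ ≤ 1 * Chat * ((1 + C) * exp (2 * m ^ 2 + ‖v‖ ^ 2 / 8))
          * (exp (‖u‖ ^ 2 / 2) * exp (-‖v‖ ^ 2 / 4)) := by
        gcongr
        · exact abs_one_add_le_of_abs_le_rpow (norm_nonneg v) ha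
        · exact exp_neg_sq_norm_sub_le v u
    _ = Chat * (1 + C) * exp (2 * m ^ 2 + ‖v‖ ^ 2 / 8 + (‖u‖ ^ 2 / 2 + -‖v‖ ^ 2 / 4)) := by
        simp only [exp_add]; ring
    _ ≤ Chat * (1 + C) * exp (2 * m ^ 2 + Chat ^ 2 / 2 + -8⁻¹ * ‖v‖ ^ 2) := by
        gcongr _ * exp ?_; linarith
    _ = Chat * (1 + C) * exp (2 * m ^ 2 + Chat ^ 2 / 2) * exp (-8⁻¹ * ‖v‖ ^ 2) := by
        rw [exp_add]; ring

theorem abs_nearVacuum_sub_le {ρ ρ' a Chat C m R : ℝ} {u u' v : V} (hρ' : 0 ≤ ρ')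
    (hρ'C : ρ' ≤ Chat) (ha : |a| ≤ C * (1 + ‖v‖) ^ m) (hv : ‖v‖ ≤ R) :
    |(2 * π) ^ (-(3:ℝ)/2) * ρ * (1 + a) * exp (-‖v - u‖ ^ 2 / 2)
      - (2 * π) ^ (-(3:ℝ)/2) * ρ' * (1 + a) * exp (-‖v - u'‖ ^ 2 / 2)|
      ≤ (1 + C) * exp (2 * m ^ 2 + R ^ 2 / 8) * (1 + Chat) * ‖(ρ, u) - (ρ', u')‖ := by
  obtain ⟨hc₀, hc₁⟩ := rpow_neg_three_halves_two_pi_mem_Icc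
  have hChat : 0 ≤ Chat := hρ'.trans hρ'C
  have hC := nonneg_of_abs_le_mul_one_add_rpow (norm_nonneg v) ha
  have hv2 : ‖v‖ ^ 2 ≤ R ^ 2 := pow_le_pow_left₀ (norm_nonneg v) hv 2
  have hρ : |ρ - ρ'| ≤ ‖(ρ, u) - (ρ', u')‖ := norm_fst_le ((ρ, u) - (ρ', u'))
  have hu : ‖u - u'‖ ≤ ‖(ρ, u) - (ρ', u')‖ := norm_snd_le ((ρ, u) - (ρ', u'))
  calc _ = (2 * π) ^ (-(3:ℝ)/2) * |1 + a|
          * |ρ * exp (-‖v - u‖ ^ 2 / 2) - ρ' * exp (-‖v - u'‖ ^ 2 / 2)| := by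
        rw [← abs_of_nonneg hc₀, ← abs_mul, ← abs_mul, abs_of_nonneg hc₀]
        ring_nf
    _ ≤ 1 * ((1 + C) * exp (2 * m ^ 2 + ‖v‖ ^ 2 / 8)) * (|ρ - ρ'| + Chat * ‖u - u'‖) := by
        gcongr
        · exact abs_one_add_le_of_abs_le_rpow (norm_nonneg v) ha
        · exact abs_mul_exp_neg_sq_norm_sub_sub_le hρ' hρ'C v u u'
    _ ≤ (1 + C) * exp (2 * m ^ 2 + R ^ 2 / 8) * ((1 + Chat) * ‖(ρ, u) - (ρ', u')‖) := by
        rw [one_mul]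
        gcongr
        nlinarith
    _ = _ := by ring

end NearVacuum

section Displacement

variable {V : Type*} [NormedAddCommGroup V] [NormedSpace ℝ V]

theorem dist_add_sub_add_smul_le (x δ v : V) (t σ : ℝ) :
    dist (x + δ - (t + σ) • v) (x - t • v) ≤ (|σ| + ‖δ‖) * (1 + ‖v‖) := by
  rw [dist_eq_norm, show x + δ - (t + σ) • v - (x - t • v) = δ - σ • v by rw [add_smul]; abel]
  calc ‖δ - σ • v‖ ≤ ‖δ‖ + |σ| * ‖v‖ := by simpa [norm_smul] using norm_sub_le δ (σ • v)
    _ ≤ (|σ| + ‖δ‖) * (1 + ‖v‖) := by nlinarith [abs_nonneg σ, norm_nonneg v, norm_nonneg δ]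

theorem UniformContinuous.exists_dist_add_sub_add_smul_lt {E : Type*} [PseudoMetricSpace E]
    {g : V → E} (hg : UniformContinuous g) (R : ℝ) {η : ℝ} (hη : 0 < η) :
    ∃ χ > 0, ∀ σ : ℝ, ∀ δ : V, |σ| + ‖δ‖ ≤ χ → ∀ x : V, ∀ t : ℝ, ∀ v : V, ‖v‖ ≤ R →
      dist (g (x + δ - (t + σ) • v)) (g (x - t • v)) < η := by
  obtain ⟨θ, hθ, hgθ⟩ := Metric.uniformContinuous_iff.1 hg η hη
  refine ⟨θ / (2 * (1 + |R|)), by positivity, fun σ δ hσδ x t v hv => hgθ ?_⟩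
  calc dist (x + δ - (t + σ) • v) (x - t • v) ≤ (|σ| + ‖δ‖) * (1 + ‖v‖) :=
        dist_add_sub_add_smul_le x δ v t σ
    _ ≤ θ / (2 * (1 + |R|)) * (1 + |R|) := by
        gcongr
        exact hv.trans (le_abs_self R)
    _ < θ := by
        rw [div_mul_eq_mul_div, div_lt_iff₀ (by positivity)]
        nlinarith [abs_nonneg R]

end Displacement

theorem exists_setLIntegral_compl_closedBall_lt {α : Type*} [PseudoMetricSpace α]
    [MeasurableSpace α] [OpensMeasurableSpace α] {μ : Measure α} {h : α → ℝ≥0∞}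
    (hh : ∫⁻ a, h a ∂μ ≠ ∞) (a₀ : α) {ε : ℝ≥0∞} (hε : 0 < ε) :
    ∃ R, ∫⁻ a in (closedBall a₀ R)ᶜ, h a ∂μ < ε := by
  have hlim : Tendsto (fun R : ℝ => μ.withDensity h (closedBall a₀ R)ᶜ) atTop (𝓝 0) := by
    have hfin : μ.withDensity h (closedBall a₀ 0)ᶜ ≠ ∞ :=
      measure_ne_top_of_subset (subset_univ _) (by
        rwa [withDensity_apply _ MeasurableSet.univ, Measure.restrict_univ])
    have hempty : ⋂ R : ℝ, (closedBall a₀ R)ᶜ = ∅ :=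
      eq_empty_of_forall_notMem fun a ha =>
        mem_iInter.1 ha (dist a a₀) (mem_closedBall.2 le_rfl)
    have := tendsto_measure_iInter_atTop
      (fun R => measurableSet_closedBall.compl.nullMeasurableSet)
      (fun R S hRS => compl_subset_compl.2 (closedBall_subset_closedBall hRS)) ⟨0, hfin⟩
    rwa [hempty, measure_empty] at this
  obtain ⟨R, hR⟩ := ((tendsto_order.1 hlim).2 ε hε).exists
  exact ⟨R, by rwa [withDensity_apply _ measurableSet_closedBall.compl] at hR⟩

theorem integral_abs_le_of_lintegral_enorm_le {α : Type*} [MeasurableSpace α] {μ : Measure α}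
    {h : α → ℝ} {ε : ℝ} (hε : 0 ≤ ε) (hh : ∫⁻ a, ‖h a‖ₑ ∂μ ≤ ENNReal.ofReal ε) :
    ∫ a, |h a| ∂μ ≤ ε := by
  have := (enorm_integral_le_lintegral_enorm (μ := μ) fun a => |h a|).trans_eq
    (by simp only [enorm_abs]) |>.trans hh
  rwa [← ofReal_norm, ENNReal.ofReal_le_ofReal_iff hε,
    Real.norm_of_nonneg (integral_nonneg fun a => abs_nonneg _)] at this

theorem integrable_exp_neg_mul_sq_norm {V : Type*} [NormedAddCommGroup V]
    [InnerProductSpace ℝ V] [FiniteDimensional ℝ V] [MeasurableSpace V] [BorelSpace V] {b : ℝ}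
    (hb : 0 < b) : Integrable fun v : V => exp (-b * ‖v‖ ^ 2) := by
  refine (GaussianFourier.integrable_cexp_neg_mul_sq_norm_add (V := V) (b := b)
    (by simpa using hb) 0 0).norm.congr (Eventually.of_forall fun v => ?_)
  simp [Complex.norm_exp, ← Complex.ofReal_pow]

section AddHaar

variable {V : Type*} [NormedAddCommGroup V] [NormedSpace ℝ V] [FiniteDimensional ℝ V]
  [MeasurableSpace V] [BorelSpace V] {μ : Measure V} [μ.IsAddHaarMeasure]

theorem map_const_sub_smul_addHaar (a : V) {s : ℝ} (hs : s ≠ 0) :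
    μ.map (fun v => a - s • v) = ENNReal.ofReal |(s ^ Module.finrank ℝ V)⁻¹| • μ := by
  have hcomp : (fun v : V => a - s • v) = (a + ·) ∘ ((-s) • ·) := by
    funext v; simp [sub_eq_add_neg]
  rw [hcomp, ← Measure.map_map (measurable_const_add a) (measurable_const_smul _),
    Measure.map_addHaar_smul μ (neg_ne_zero.2 hs), Measure.map_smul, map_add_left_eq_self]
  simp [abs_inv, abs_pow]

theorem quasiMeasurePreserving_const_sub_smul (a : V) {s : ℝ} (hs : s ≠ 0) :
    Measure.QuasiMeasurePreserving (fun v => a - s • v) μ μ :=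
  ⟨by fun_prop, by rw [map_const_sub_smul_addHaar a hs]; exact Measure.smul_absolutelyContinuous⟩

theorem setLIntegral_enorm_comp_const_sub_smul_le {E : Type*} [NormedAddCommGroup E]
    {g : V → E} (hg : AEStronglyMeasurable g μ) {q : ℝ≥0∞} (hq : 1 ≤ q) (S : Set V) (a : V)
    {s₀ s : ℝ} (hs₀ : 0 < s₀) (hs : s₀ ≤ s) :
    ∫⁻ v in S, ‖g (a - s • v)‖ₑ ∂μ ≤
      ENNReal.ofReal (s₀ ^ Module.finrank ℝ V)⁻¹ ^ (1 / q).toReal * μ S ^ (1 - 1 / q.toReal)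
        * eLpNorm g q μ := by
  set A : V → V := fun v => a - s • v
  have hs0 : 0 < s := hs₀.trans_le hs
  have hmap := map_const_sub_smul_addHaar (μ := μ) a hs0.ne'
  have hAqmp := quasiMeasurePreserving_const_sub_smul (μ := μ) a hs0.ne'
  have hgA : eLpNorm (g ∘ A) q μ
      = ENNReal.ofReal |(s ^ Module.finrank ℝ V)⁻¹| ^ (1 / q).toReal * eLpNorm g q μ := by
    rw [← eLpNorm_map_measure (by rw [hmap]; exact hg.smul_measure _) (by fun_prop), hmap,
      eLpNorm_smul_measure_of_ne_zero (by simpa using pow_pos (abs_pos.2 hs0.ne') _),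
      smul_eq_mul]
  calc ∫⁻ v in S, ‖g (A v)‖ₑ ∂μ = eLpNorm (g ∘ A) 1 (μ.restrict S) :=
        eLpNorm_one_eq_lintegral_enorm.symm
    _ ≤ eLpNorm (g ∘ A) q (μ.restrict S) * μ.restrict S univ ^ (1 / 1 - 1 / q.toReal) := by
        simpa using eLpNorm_le_eLpNorm_mul_rpow_measure_univ hq
          (hg.comp_quasiMeasurePreserving hAqmp).restrict
    _ ≤ eLpNorm (g ∘ A) q μ * μ S ^ (1 - 1 / q.toReal) := by
        rw [Measure.restrict_apply_univ, div_one]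
        gcongr
        exact Measure.restrict_le_self
    _ ≤ _ := by
        rw [hgA, mul_right_comm]
        gcongr
        rw [abs_of_pos (by positivity)]
        gcongr

theorem MeasureTheory.MemLp.exists_setLIntegral_closedBall_enorm_comp_sub_le {E : Type*}
    [NormedAddCommGroup E] [NormedSpace ℝ E] {f : V → E} {q : ℝ≥0∞} (hf : MemLp f q μ)
    (hq : 1 ≤ q) (hq_top : q ≠ ∞) {t₁ : ℝ} (ht₁ : 0 < t₁) (R : ℝ) {ε : ℝ≥0∞} (hε : 0 < ε) :
    ∃ χ > 0, ∀ σ : ℝ, ∀ δ : V, |σ| + ‖δ‖ ≤ χ → ∀ x : V, ∀ t : ℝ, t₁ ≤ t →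
      ∫⁻ v in closedBall 0 R, ‖f (x + δ - (t + σ) • v) - f (x - t • v)‖ₑ ∂μ ≤ ε := by
  set S : Set V := closedBall 0 R
  have hS : μ S ≠ ∞ := (isCompact_closedBall 0 R).measure_lt_top.ne
  have hε3 : ε / 3 ≠ 0 := (ENNReal.div_pos hε.ne' ENNReal.ofNat_ne_top).ne'
  set K := ENNReal.ofReal ((t₁ / 2) ^ Module.finrank ℝ V)⁻¹ ^ (1 / q).toReal
    * μ S ^ (1 - 1 / q.toReal)
  have hK : K ≠ ∞ := by
    have hq1 : 1 / q.toReal ≤ 1 := by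
      have := ENNReal.toReal_mono hq_top hq
      rw [ENNReal.toReal_one] at this
      exact div_le_one_of_le₀ this (by positivity)
    exact ENNReal.mul_ne_top (ENNReal.rpow_ne_top_of_nonneg ENNReal.toReal_nonneg
      ENNReal.ofReal_ne_top) (ENNReal.rpow_ne_top_of_nonneg (by linarith) hS)
  obtain ⟨g, hg_supp, hfg, hg_cont, -⟩ := hf.exists_hasCompactSupport_eLpNorm_sub_le hq_top
    (ENNReal.div_pos hε3 hK).ne'
  have happrox : ∀ (a : V) (s : ℝ), t₁ / 2 ≤ s →
      ∫⁻ v in S, ‖(f - g) (a - s • v)‖ₑ ∂μ ≤ ε / 3 := fun a s hs =>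
    (setLIntegral_enorm_comp_const_sub_smul_le (hf.1.sub hg_cont.aestronglyMeasurable) hq S a
      (by positivity) hs).trans ((mul_le_mul_right hfg K).trans ENNReal.mul_div_le)
  obtain ⟨η, -, hη0, hηS⟩ := ENNReal.lt_iff_exists_real_btwn.1 (ENNReal.div_pos hε3 hS)
  obtain ⟨χ, hχ, hgχ⟩ := UniformContinuous.exists_dist_add_sub_add_smul_lt
    (hg_supp.uniformContinuous_of_continuous hg_cont) R (ENNReal.ofReal_pos.1 hη0)
  refine ⟨min χ (t₁ / 2), by positivity, fun σ δ hσδ x t ht => ?_⟩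
  have hσ : |σ| ≤ t₁ / 2 := by linarith [norm_nonneg δ, min_le_right χ (t₁ / 2)]
  have hts : t₁ / 2 ≤ t + σ := by linarith [neg_abs_le σ]
  have hcont : ∫⁻ v in S, ‖g (x + δ - (t + σ) • v) - g (x - t • v)‖ₑ ∂μ ≤ ε / 3 := by
    calc ∫⁻ v in S, ‖g (x + δ - (t + σ) • v) - g (x - t • v)‖ₑ ∂μ
        ≤ ∫⁻ _ in S, ENNReal.ofReal η ∂μ := by
          refine setLIntegral_mono' measurableSet_closedBall fun v hv => ?_
          rw [← edist_eq_enorm_sub, edist_dist]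
          exact ENNReal.ofReal_le_ofReal (hgχ σ δ (hσδ.trans (min_le_left _ _)) x t v
            (mem_closedBall_zero_iff.1 hv)).le
      _ = ENNReal.ofReal η * μ S := setLIntegral_const _ _
      _ ≤ ε / 3 / μ S * μ S := by gcongr
      _ ≤ ε / 3 := by rw [mul_comm]; exact ENNReal.mul_div_le
  have htri : ∀ a b : V, ‖f a - f b‖ₑ ≤ ‖(f - g) a‖ₑ + ‖g a - g b‖ₑ + ‖(f - g) b‖ₑ := by
    intro a b
    calc ‖f a - f b‖ₑ = ‖(f - g) a + (g a - g b) - (f - g) b‖ₑ := by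
          congr 1; simp only [Pi.sub_apply]; abel
      _ ≤ _ := enorm_sub_le.trans (add_le_add_left (enorm_add_le _ _) _)
  have hmeas : ∀ (a : V) (s : ℝ), 0 < s →
      AEMeasurable (fun v => ‖(f - g) (a - s • v)‖ₑ) (μ.restrict S) := fun a s hs =>
    ((hf.1.sub hg_cont.aestronglyMeasurable).comp_quasiMeasurePreserving
      (quasiMeasurePreserving_const_sub_smul a hs.ne')).enorm.restrict
  calc ∫⁻ v in S, ‖f (x + δ - (t + σ) • v) - f (x - t • v)‖ₑ ∂μ
      ≤ ∫⁻ v in S, (‖(f - g) (x + δ - (t + σ) • v)‖ₑ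
          + ‖g (x + δ - (t + σ) • v) - g (x - t • v)‖ₑ + ‖(f - g) (x - t • v)‖ₑ) ∂μ :=
        lintegral_mono fun v => htri _ _
    _ = ∫⁻ v in S, ‖(f - g) (x + δ - (t + σ) • v)‖ₑ ∂μ
          + ∫⁻ v in S, ‖g (x + δ - (t + σ) • v) - g (x - t • v)‖ₑ ∂μ
          + ∫⁻ v in S, ‖(f - g) (x - t • v)‖ₑ ∂μ := by
        rw [lintegral_add_right' _ (hmeas x t (by linarith)),
          lintegral_add_left' (hmeas (x + δ) (t + σ) (by linarith))]
    _ ≤ ε / 3 + ε / 3 + ε / 3 := by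
        gcongr
        · exact happrox _ _ hts
        · exact happrox _ _ (by linarith)
    _ = ε := ENNReal.add_thirds ε

theorem exists_lintegral_enorm_comp_sub_le_of_dominated_of_lipschitz {E F : Type*}
    [NormedAddCommGroup E] [NormedSpace ℝ E] [NormedAddCommGroup F]
    {G : V → V → F} {f : V → E} {q : ℝ≥0∞} (hf : MemLp f q μ) (hq : 1 ≤ q) (hq_top : q ≠ ∞)
    {g : V → ℝ} (hg : Integrable g μ) (hGg : ∀ y v, ‖G y v‖ ≤ g v)
    (hGf : ∀ R : ℝ, ∃ L : ℝ, ∀ y y' v, ‖v‖ ≤ R → ‖G y v - G y' v‖ ≤ L * ‖f y - f y'‖)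
    {t₁ : ℝ} (ht₁ : 0 < t₁) {ε : ℝ≥0∞} (hε : 0 < ε) :
    ∃ χ > 0, ∀ σ : ℝ, ∀ δ : V, |σ| + ‖δ‖ ≤ χ → ∀ x : V, ∀ t : ℝ, t₁ ≤ t →
      ∫⁻ v, ‖G (x + δ - (t + σ) • v) v - G (x - t • v) v‖ₑ ∂μ ≤ ε := by
  have hε2 : 0 < ε / 2 := ENNReal.div_pos hε.ne' ENNReal.ofNat_ne_top
  obtain ⟨R, hR⟩ := exists_setLIntegral_compl_closedBall_lt hg.lintegral_lt_top.ne 0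
    (ENNReal.div_pos hε2.ne' (ENNReal.ofNat_ne_top (n := 2)))
  obtain ⟨L, hL⟩ := hGf R
  obtain ⟨χ, hχ, hfχ⟩ := hf.exists_setLIntegral_closedBall_enorm_comp_sub_le hq hq_top ht₁ R
    (ENNReal.div_pos hε2.ne' (ENNReal.ofReal_ne_top (r := L)))
  refine ⟨χ, hχ, fun σ δ hσδ x t ht => ?_⟩
  set a : V → V := fun v => x + δ - (t + σ) • v
  set b : V → V := fun v => x - t • v
  have hball : ∫⁻ v in closedBall 0 R, ‖G (a v) v - G (b v) v‖ₑ ∂μ ≤ ε / 2 :=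
    calc ∫⁻ v in closedBall 0 R, ‖G (a v) v - G (b v) v‖ₑ ∂μ
        ≤ ∫⁻ v in closedBall 0 R, ENNReal.ofReal L * ‖f (a v) - f (b v)‖ₑ ∂μ := by
          refine setLIntegral_mono' measurableSet_closedBall fun v hv => ?_
          rw [← ofReal_norm, ← ofReal_norm, ← ENNReal.ofReal_mul' (norm_nonneg _)]
          exact ENNReal.ofReal_le_ofReal (hL _ _ v (mem_closedBall_zero_iff.1 hv))
      _ = ENNReal.ofReal L * ∫⁻ v in closedBall 0 R, ‖f (a v) - f (b v)‖ₑ ∂μ :=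
          lintegral_const_mul' _ _ ENNReal.ofReal_ne_top
      _ ≤ ε / 2 := (mul_le_mul_right (hfχ σ δ hσδ x t ht) _).trans ENNReal.mul_div_le
  have htail : ∫⁻ v in (closedBall 0 R)ᶜ, ‖G (a v) v - G (b v) v‖ₑ ∂μ ≤ ε / 2 :=
    calc ∫⁻ v in (closedBall 0 R)ᶜ, ‖G (a v) v - G (b v) v‖ₑ ∂μ
        ≤ ∫⁻ v in (closedBall 0 R)ᶜ, 2 * ENNReal.ofReal (g v) ∂μ := by
          refine lintegral_mono fun v => ?_
          rw [← ofReal_norm, two_mul, ← ENNReal.ofReal_add ((norm_nonneg _).trans (hGg x v))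
            ((norm_nonneg _).trans (hGg x v))]
          exact ENNReal.ofReal_le_ofReal
            ((norm_sub_le _ _).trans (add_le_add (hGg _ v) (hGg _ v)))
      _ = 2 * ∫⁻ v in (closedBall 0 R)ᶜ, ENNReal.ofReal (g v) ∂μ :=
          lintegral_const_mul' _ _ ENNReal.ofNat_ne_top
      _ ≤ ε / 2 := (mul_le_mul_right hR.le _).trans ENNReal.mul_div_le
  rw [← lintegral_add_compl _ measurableSet_closedBall, ← ENNReal.add_halves ε]
  exact add_le_add hball htail

end AddHaar

theorem tendsto_nhds_zero_of_forall_abs_add_norm_le {V : Type*} [NormedAddCommGroup V]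
    {Φ : ℝ × V → ℝ} (hΦ : ∀ sd, 0 ≤ Φ sd)
    (h : ∀ ε > 0, ∃ χ > 0, ∀ σ : ℝ, ∀ δ : V, |σ| + ‖δ‖ ≤ χ → Φ (σ, δ) ≤ ε) :
    Tendsto Φ (𝓝 0) (𝓝 0) := by
  rw [Metric.tendsto_nhds]
  intro ε hε
  obtain ⟨χ, hχ, hΦχ⟩ := h (ε / 2) (by positivity)
  filter_upwards [Metric.ball_mem_nhds (0 : ℝ × V) (half_pos hχ)] with sd hsd
  rw [mem_ball_zero_iff, Prod.norm_def, max_lt_iff, Real.norm_eq_abs] at hsd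
  rw [Real.dist_0_eq_abs, abs_of_nonneg (hΦ sd)]
  exact (hΦχ sd.1 sd.2 (by linarith)).trans_lt (half_lt_self hε)

theorem near_vacuum_data_conditions_general
    (ρ₀ : R3 → ℝ) (u₀ : R3 → R3) (P : R3 → ℝ) (Chat C m p : ℝ)
    (F₀ : R3 → R3 → ℝ)
    (hp : 1 ≤ p)
    (hρbd : ∀ x : R3, 0 ≤ ρ₀ x ∧ ρ₀ x ≤ Chat)
    (hubd : ∀ x : R3, ‖u₀ x‖ ≤ Chat)
    (hP : ∀ v : R3, |P v| ≤ C * (1 + ‖v‖) ^ m)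
    (hρLp : MemLp ρ₀ (ENNReal.ofReal p) volume)
    (huLp : MemLp u₀ (ENNReal.ofReal p) volume)
    (hF₀ : ∀ x v : R3, F₀ x v =
      (2 * π) ^ (-(3:ℝ)/2) * ρ₀ x * (1 + P v) * Real.exp (-‖v - u₀ x‖ ^ 2 / 2)) :
    (∀ t₁ T : ℝ, 0 < t₁ → t₁ < T → ∀ ε : ℝ, 0 < ε →
      ∃ χ : ℝ, 0 < χ ∧ ∀ σ : ℝ, ∀ δ : R3, |σ| + ‖δ‖ ≤ χ →
        ∀ x : R3, ∀ t : ℝ, t ∈ Icc t₁ T →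
          (∫ v : R3, |F₀ (x + δ - (t + σ) • v) v - F₀ (x - t • v) v|) ≤ ε) ∧
    (∀ x : R3, ∀ t : ℝ, 0 < t →
      Tendsto (fun sd : ℝ × R3 =>
          ∫ v : R3, |F₀ (x + sd.2 - (t + sd.1) • v) v - F₀ (x - t • v) v|)
        (nhds (0, 0)) (nhds 0)) := by
  have hdom : ∀ y v, ‖F₀ y v‖ ≤
      Chat * (1 + C) * exp (2 * m ^ 2 + Chat ^ 2 / 2) * exp (-8⁻¹ * ‖v‖ ^ 2) := fun y v => by
    rw [hF₀]; exact abs_nearVacuum_le (hρbd y).1 (hρbd y).2 (hubd y) (hP v)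
  have hlip : ∀ R : ℝ, ∃ L : ℝ, ∀ y y' v, ‖v‖ ≤ R →
      ‖F₀ y v - F₀ y' v‖ ≤ L * ‖(ρ₀ y, u₀ y) - (ρ₀ y', u₀ y')‖ := fun R =>
    ⟨_, fun y y' v hv => by
      rw [hF₀, hF₀]; exact abs_nearVacuum_sub_le (hρbd y').1 (hρbd y').2 (hP v) hv⟩
  have huniform : ∀ t₁ : ℝ, 0 < t₁ → ∀ ε : ℝ, 0 < ε →
      ∃ χ : ℝ, 0 < χ ∧ ∀ σ : ℝ, ∀ δ : R3, |σ| + ‖δ‖ ≤ χ → ∀ x : R3, ∀ t : ℝ, t₁ ≤ t →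
        (∫ v : R3, |F₀ (x + δ - (t + σ) • v) v - F₀ (x - t • v) v|) ≤ ε := by
    intro t₁ ht₁ ε hε
    obtain ⟨χ, hχ, h⟩ := exists_lintegral_enorm_comp_sub_le_of_dominated_of_lipschitz
      (memLp_prod_iff.2 ⟨hρLp, huLp⟩) (ENNReal.one_le_ofReal.2 hp) ENNReal.ofReal_ne_top
      ((integrable_exp_neg_mul_sq_norm (by norm_num)).const_mul _) hdom hlip ht₁
      (ENNReal.ofReal_pos.2 hε)
    exact ⟨χ, hχ, fun σ δ hσδ x t ht =>
      integral_abs_le_of_lintegral_enorm_le hε.le (h σ δ hσδ x t ht)⟩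
  refine ⟨fun t₁ T ht₁ _ ε hε => ?_, fun x t ht => ?_⟩
  · obtain ⟨χ, hχ, h⟩ := huniform t₁ ht₁ ε hε
    exact ⟨χ, hχ, fun σ δ hσδ x t ht => h σ δ hσδ x t ht.1⟩
  · refine tendsto_nhds_zero_of_forall_abs_add_norm_le
      (fun _ => integral_nonneg fun _ => abs_nonneg _) fun ε hε => ?_
    obtain ⟨χ, hχ, h⟩ := huniform t ht ε hε
    exact ⟨χ, hχ, fun σ δ hσδ => h σ δ hσδ x t le_rfl⟩

/-- A near-vacuum initial datum (1.8-1) satisfies condition (1.5-2) (uniformly on strips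
`ℝ³×[t₁,T]`) and, in particular, the second part of condition (1.5) at every fixed
`(x,t)` with `t > 0`. -/
theorem near_vacuum_data_conditions
    (ρ₀ : R3 → ℝ) (u₀ : R3 → R3) (P : R3 → ℝ) (Chat C m p : ℝ)
    (F₀ : R3 → R3 → ℝ)
    (hChat : 1 ≤ Chat) (hC : 0 < C) (hm : 0 < m) (hp : 1 ≤ p)
    (hρmeas : Measurable ρ₀) (humeas : Measurable u₀) (hPmeas : Measurable P)
    (hρbd : ∀ x : R3, 0 ≤ ρ₀ x ∧ ρ₀ x ≤ Chat)
    (hubd : ∀ x : R3, ‖u₀ x‖ ≤ Chat)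
    (hP : ∀ v : R3, |P v| ≤ C * (1 + ‖v‖) ^ m)
    (hρLp : MemLp ρ₀ (ENNReal.ofReal p) volume)
    (huLp : MemLp u₀ (ENNReal.ofReal p) volume)
    (hF₀ : ∀ x v : R3, F₀ x v =
      (2 * π) ^ (-(3:ℝ)/2) * ρ₀ x * (1 + P v) * Real.exp (-‖v - u₀ x‖ ^ 2 / 2)) :
    (∀ t₁ T : ℝ, 0 < t₁ → t₁ < T → ∀ ε : ℝ, 0 < ε →
      ∃ χ : ℝ, 0 < χ ∧ ∀ σ : ℝ, ∀ δ : R3, |σ| + ‖δ‖ ≤ χ →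
        ∀ x : R3, ∀ t : ℝ, t ∈ Icc t₁ T →
          (∫ v : R3, |F₀ (x + δ - (t + σ) • v) v - F₀ (x - t • v) v|) ≤ ε) ∧
    (∀ x : R3, ∀ t : ℝ, 0 < t →
      Tendsto (fun sd : ℝ × R3 =>
          ∫ v : R3, |F₀ (x + sd.2 - (t + sd.1) • v) v - F₀ (x - t • v) v|)
        (nhds (0, 0)) (nhds 0)) :=
  near_vacuum_data_conditions_general ρ₀ u₀ P Chat C m p F₀ hp hρbd hubd hP hρLp huLp hF₀
end
end
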